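/- Assume the likelihood quotient O(X_K)/I_K is a nonzero finite-dimensional K-vector space, and let K̄ be an algebraic closure of K. Let Z ⊆ (K̄∖{0})ⁿ be the set of points p with f_i(p) ≠ 0 for all i = 1,…,ℓ and w_j(p) = 0 for all j = 1,…,n (the solutions of the likelihood equations). Then for each k ∈ {1,…,n}, the set of eigenvalues in K̄ of the K-linear map O(X_K)/I_K → O(X_K)/I_K, [g] ↦ [x_k·g], equals {p_k : p ∈ Z}, and for each i ∈ {1,…,ℓ} the set of eigenvalues in K̄ of [g] ↦ [f_i^{−1}·g] equals {f_i(p)^{−1} : p ∈ Z}. -/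

import Mathlib

set_option maxHeartbeats 1000000
set_option synthInstance.maxHeartbeats 400000

noncomputable section

open MvPolynomial

/-- The polynomial ring ℂ[s₁,…,s_ℓ,ν₁,…,νₙ]. -/
abbrev PRing (l n : ℕ) : Type := MvPolynomial (Fin l ⊕ Fin n) ℂ

/-- The rational function field K = ℂ(s₁,…,s_ℓ,ν₁,…,νₙ). -/
abbrev KK (l n : ℕ) : Type := FractionRing (PRing l n)

/-- The generator s_i of K. -/
def sGen (l n : ℕ) (i : Fin l) : KK l n :=
  algebraMap (PRing l n) (KK l n) (X (Sum.inl i))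

/-- The generator ν_j of K. -/
def nuGen (l n : ℕ) (j : Fin n) : KK l n :=
  algebraMap (PRing l n) (KK l n) (X (Sum.inr j))

/-- The Laurent polynomial ring A[x₁^{±1},…,xₙ^{±1}]. -/
abbrev Laur (n : ℕ) (A : Type) [CommRing A] : Type :=
  AddMonoidAlgebra A (Fin n → ℤ)

/-- The Laurent monomial x^b. -/
def lmono {n : ℕ} {A : Type} [CommRing A] (b : Fin n → ℤ) : Laur n A :=
  AddMonoidAlgebra.single b 1

/-- The partial derivative ∂/∂x_j of a Laurent polynomial. -/
def lpderiv {n : ℕ} {A : Type} [CommRing A] (j : Fin n) (f : Laur n A) : Laur n A :=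
  Finsupp.sum f.coeff fun m c => AddMonoidAlgebra.single (m - Pi.single j 1) ((m j : A) * c)

/-- Coefficientwise map of Laurent polynomial rings along a ring homomorphism. -/
def laurMap {n : ℕ} {A B : Type} [CommRing A] [CommRing B] (φ : A →+* B) :
    Laur n A →+* Laur n B where
  toFun g := AddMonoidAlgebra.ofCoeff (Finsupp.mapRange φ φ.map_zero g.coeff)
  map_one' := (AddMonoidAlgebra.mapRingHom (Fin n → ℤ) φ).map_one'
  map_mul' := (AddMonoidAlgebra.mapRingHom (Fin n → ℤ) φ).map_mul'
  map_zero' := (AddMonoidAlgebra.mapRingHom (Fin n → ℤ) φ).map_zero'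
  map_add' := (AddMonoidAlgebra.mapRingHom (Fin n → ℤ) φ).map_add'

end

noncomputable section
/-- The inclusion ℂ → K. -/
def cC (l n : ℕ) : ℂ →+* KK l n := (algebraMap (PRing l n) (KK l n)).comp MvPolynomial.C

/-- The coefficient map ℂ → A obtained from κ : K → A. -/
def cmap {l n : ℕ} {A : Type} [CommRing A] (κ : KK l n →+* A) : ℂ →+* A :=
  κ.comp (cC l n)

/-- The image of the Laurent polynomial f_i in A[x^{±1}]. -/
def fImg {l n : ℕ} (f : Fin l → Laur n ℂ) {A : Type} [CommRing A] (κ : KK l n →+* A)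
    (i : Fin l) : Laur n A := laurMap (cmap κ) (f i)

/-- The product f₁ ⋯ f_ℓ in A[x^{±1}]. -/
def FProd {l n : ℕ} (f : Fin l → Laur n ℂ) {A : Type} [CommRing A] (κ : KK l n →+* A) :
    Laur n A := ∏ i, fImg f κ i

/-- O(X_A) = A[x₁^{±1},…,xₙ^{±1}] localized at f₁⋯f_ℓ. -/
abbrev OX {l n : ℕ} (f : Fin l → Laur n ℂ) {A : Type} [CommRing A] (κ : KK l n →+* A) :
    Type := Localization.Away (FProd f κ)

end

noncomputable section

/-- x_j as a unit of O(X_A). -/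
def xU {l n : ℕ} (f : Fin l → Laur n ℂ) {A : Type} [CommRing A] (κ : KK l n →+* A)
    (j : Fin n) : (OX f κ)ˣ where
  val := algebraMap (Laur n A) (OX f κ) (lmono (Pi.single j 1))
  inv := algebraMap (Laur n A) (OX f κ) (lmono (-Pi.single j 1))
  val_inv := by
    rw [← map_mul]
    simp only [lmono, AddMonoidAlgebra.single_mul_single, add_neg_cancel, one_mul]
    rw [← AddMonoidAlgebra.one_def, map_one]
  inv_val := by
    rw [← map_mul]
    simp only [lmono, AddMonoidAlgebra.single_mul_single, neg_add_cancel, one_mul]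
    rw [← AddMonoidAlgebra.one_def, map_one]

lemma fImg_isUnit {l n : ℕ} (f : Fin l → Laur n ℂ) {A : Type} [CommRing A]
    (κ : KK l n →+* A) (i : Fin l) :
    IsUnit (algebraMap (Laur n A) (OX f κ) (fImg f κ i)) := by
  have h : fImg f κ i ∣ FProd f κ := Finset.dvd_prod_of_mem _ (Finset.mem_univ i)
  exact IsLocalization.Away.isUnit_of_dvd (x := FProd f κ) (S := OX f κ) h

/-- f_i as a unit of O(X_A). -/
def fU {l n : ℕ} (f : Fin l → Laur n ℂ) {A : Type} [CommRing A] (κ : KK l n →+* A)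
    (i : Fin l) : (OX f κ)ˣ := (fImg_isUnit f κ i).unit

/-- f^a = f₁^{a₁} ⋯ f_ℓ^{a_ℓ} for an integer vector a. -/
def fpow {l n : ℕ} (f : Fin l → Laur n ℂ) {A : Type} [CommRing A] (κ : KK l n →+* A)
    (a : Fin l → ℤ) : OX f κ := ↑(∏ i, (fU f κ i) ^ (a i))

end

noncomputable section
/-- The element
v_{a,b,j} = x₁⋯xₙ · f^a · x^b · ((ν_j + δ b_j) x_j^{-1} - Σ_i (s_i - δ a_i) f_i^{-1} ∂f_i/∂x_j)
of O(X_A). -/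
def vElt {l n : ℕ} (f : Fin l → Laur n ℂ) {A : Type} [CommRing A] (κ : KK l n →+* A)
    (δ : A) (a : Fin l → ℤ) (b : Fin n → ℤ) (j : Fin n) : OX f κ :=
  algebraMap (Laur n A) (OX f κ) (lmono fun _ => 1) * fpow f κ a *
    algebraMap (Laur n A) (OX f κ) (lmono b) *
    (algebraMap A (OX f κ) (κ (nuGen l n j) + δ * (b j : A)) * ↑(xU f κ j)⁻¹ -
      ∑ i : Fin l, algebraMap A (OX f κ) (κ (sGen l n i) - δ * (a i : A)) *
        (↑(fU f κ i)⁻¹ * algebraMap (Laur n A) (OX f κ) (lpderiv j (fImg f κ i))))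

/-- The A-submodule V_A ⊆ O(X_A) spanned by the elements v_{a,b,j}. -/
def VA {l n : ℕ} (f : Fin l → Laur n ℂ) {A : Type} [CommRing A] (κ : KK l n →+* A)
    (δ : A) : Submodule A (OX f κ) :=
  Submodule.span A {g | ∃ a b j, g = vElt f κ δ a b j}

/-- The generator w_j = ν_j x_j^{-1} - Σ_i s_i f_i^{-1} ∂f_i/∂x_j of the
likelihood ideal, in O(X_K). -/
def wElt {l n : ℕ} (f : Fin l → Laur n ℂ) (j : Fin n) :
    OX f (RingHom.id (KK l n)) :=
  algebraMap (KK l n) (OX f (RingHom.id (KK l n))) (nuGen l n j) *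
      ↑(xU f (RingHom.id (KK l n)) j)⁻¹ -
    ∑ i : Fin l, algebraMap (KK l n) (OX f (RingHom.id (KK l n))) (sGen l n i) *
      (↑(fU f (RingHom.id (KK l n)) i)⁻¹ *
        algebraMap (Laur n (KK l n)) (OX f (RingHom.id (KK l n)))
          (lpderiv j (fImg f (RingHom.id (KK l n)) i)))

/-- The likelihood ideal I_K ⊆ O(X_K). -/
def likeIdeal {l n : ℕ} (f : Fin l → Laur n ℂ) : Ideal (OX f (RingHom.id (KK l n))) :=
  Ideal.span {g | ∃ j, g = wElt f j}
end

noncomputable section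
/-- The generators (s₁,…,s_ℓ,ν₁,…,νₙ) of K. -/
def genK (l n : ℕ) : (Fin l ⊕ Fin n) → KK l n := Sum.elim (sGen l n) (nuGen l n)

lemma laurMap_comp_apply {n : ℕ} {A B C : Type} [CommRing A] [CommRing B] [CommRing C]
    (θ : B →+* C) (φ : A →+* B) (g : Laur n A) :
    laurMap θ (laurMap φ g) = laurMap (θ.comp φ) g := by
  show AddMonoidAlgebra.ofCoeff (Finsupp.mapRange θ θ.map_zero
    (Finsupp.mapRange φ φ.map_zero g.coeff)) = _
  rw [← Finsupp.mapRange_comp (h := by simp)]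
  rfl

lemma laurMap_FProd {l n : ℕ} (f : Fin l → Laur n ℂ) {A B : Type} [CommRing A] [CommRing B]
    (κ₁ : KK l n →+* A) (κ₂ : KK l n →+* B) (θ : A →+* B)
    (hθ : θ.comp (cmap κ₁) = cmap κ₂) :
    laurMap θ (FProd f κ₁) = FProd f κ₂ := by
  rw [FProd, map_prod]
  refine Finset.prod_congr rfl fun i _ => ?_
  show laurMap θ (laurMap (cmap κ₁) (f i)) = laurMap (cmap κ₂) (f i)
  rw [laurMap_comp_apply, hθ]

/-- The coefficientwise ring homomorphism O(X_A) → O(X_B) induced by a ring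
homomorphism θ : A → B compatible with the coefficient maps. -/
def OXmap {l n : ℕ} (f : Fin l → Laur n ℂ) {A B : Type} [CommRing A] [CommRing B]
    (κ₁ : KK l n →+* A) (κ₂ : KK l n →+* B) (θ : A →+* B)
    (hθ : θ.comp (cmap κ₁) = cmap κ₂) : OX f κ₁ →+* OX f κ₂ :=
  Localization.awayLift ((algebraMap (Laur n B) (OX f κ₂)).comp (laurMap θ)) (FProd f κ₁)
    (by
      rw [RingHom.comp_apply, laurMap_FProd f κ₁ κ₂ θ hθ]
      exact IsLocalization.Away.algebraMap_isUnit _)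
end

noncomputable section

/-- O(X_K), the case A = K, δ = 1. -/
abbrev OXK {l n : ℕ} (f : Fin l → Laur n ℂ) : Type := OX f (RingHom.id (KK l n))

/-- The algebraic closure of K. -/
abbrev Kbar (l n : ℕ) : Type := AlgebraicClosure (KK l n)

/-- Evaluation of a Laurent polynomial with complex coefficients at a point
p with (intended) nonzero coordinates, over a field F via φ : ℂ → F. -/
def laurEval {n : ℕ} {F : Type} [Field F] (φ : ℂ →+* F) (p : Fin n → F)
    (g : Laur n ℂ) : F :=
  Finsupp.sum g.coeff fun m c => φ c * ∏ k, p k ^ (m k)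

/-- The coefficient embedding ℂ → K̄. -/
def cbar (l n : ℕ) : ℂ →+* Kbar l n :=
  (algebraMap (KK l n) (Kbar l n)).comp (cC l n)

/-- The set of solutions of the likelihood equations in (K̄ ∖ {0})ⁿ. -/
def critSet {l n : ℕ} (f : Fin l → Laur n ℂ) : Set (Fin n → Kbar l n) :=
  {p | (∀ k, p k ≠ 0) ∧ (∀ i, laurEval (cbar l n) p (f i) ≠ 0) ∧
    (∀ j, algebraMap (KK l n) (Kbar l n) (nuGen l n j) * (p j)⁻¹ -
      ∑ i : Fin l, algebraMap (KK l n) (Kbar l n) (sGen l n i) *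
        ((laurEval (cbar l n) p (f i))⁻¹ * laurEval (cbar l n) p (lpderiv j (f i))) = 0)}

/-!
Let `B` be a finite-dimensional commutative algebra over a field `F` and `L ⊇ F` algebraically
closed. The roots in `L` of the characteristic polynomial of multiplication by `v ∈ B` are the
values `ψ v` of the `F`-algebra maps `ψ : B → L`: after base change they form the spectrum of
`1 ⊗ v` in `L ⊗ B`, and every maximal ideal of the finite-dimensional `L`-algebra `L ⊗ B` has
residue field `L`. For `B = O(X_K)/I_K`, a `K`-algebra map `O(X_K) → K̄` is evaluation at the point
`p = (ψ x_k)_k ∈ (K̄ˣ)ⁿ`, at which no `f_i` vanishes, and it kills `I_K` exactly when `p` solves the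
likelihood equations; it sends `x_k` to `p_k` and `f_i⁻¹` to `f_i(p)⁻¹`.
-/

section
variable {k C : Type*} [Field k] [IsAlgClosed k] [CommRing C] [Algebra k C] [Module.Finite k C]

theorem exists_algHom_apply_eq_zero_of_not_isUnit {w : C} (hw : ¬IsUnit w) :
    ∃ ψ : C →ₐ[k] k, ψ w = 0 := by
  obtain ⟨m, hm, hwm⟩ := exists_max_ideal_of_mem_nonunits (mem_nonunits_iff.mpr hw)
  have : Module.Finite k (C ⧸ m) :=
    Module.Finite.of_surjective (Ideal.Quotient.mkₐ k m).toLinearMap Ideal.Quotient.mk_surjective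
  let e : k ≃ₐ[k] C ⧸ m :=
    AlgEquiv.ofBijective (Algebra.ofId k _) IsAlgClosed.algebraMap_bijective_of_isIntegral
  exact ⟨e.symm.toAlgHom.comp (Ideal.Quotient.mkₐ k m), by
    simp [Ideal.Quotient.eq_zero_iff_mem.mpr hwm]⟩

theorem mem_spectrum_iff_exists_algHom_apply_eq (w : C) (z : k) :
    z ∈ spectrum k w ↔ ∃ ψ : C →ₐ[k] k, ψ w = z := by
  refine ⟨fun hz => ?_, fun ⟨ψ, hψ⟩ => hψ ▸ AlgHom.apply_mem_spectrum ψ w⟩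
  obtain ⟨ψ, hψ⟩ :=
    exists_algHom_apply_eq_zero_of_not_isUnit (k := k) (spectrum.mem_iff.mp hz)
  exact ⟨ψ, (sub_eq_zero.mp (by simpa using hψ)).symm⟩
end

theorem spectrum_lmul {R A : Type*} [CommRing R] [Ring A] [Algebra R A] (a : A) :
    spectrum R (Algebra.lmul R A a) = spectrum R a := by
  ext z
  simp only [spectrum.mem_iff, ← Algebra.lmul_isUnit_iff (R := R), map_sub, AlgHom.commutes]

open Polynomial in
theorem aeval_charpoly_mulLeft_eq_zero_iff {F B L : Type*} [Field F] [CommRing B] [Algebra F B]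
    [Module.Finite F B] [Field L] [Algebra F L] [IsAlgClosed L] (v : B) (z : L) :
    aeval z (LinearMap.mulLeft F v).charpoly = 0 ↔ ∃ ψ : B →ₐ[F] L, ψ v = z := by
  have hmul : LinearMap.mulLeft F v = Algebra.lmul F B v := rfl
  rw [aeval_def, eval₂_eq_eval_map, ← LinearMap.charpoly_baseChange, ← IsRoot.def,
    ← Module.End.mem_spectrum_iff_isRoot_charpoly, hmul, Algebra.baseChange_lmul, spectrum_lmul,
    mem_spectrum_iff_exists_algHom_apply_eq]
  exact (AlgHom.liftEquiv F L B L).symm.exists_congr fun _ => Iff.rfl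

section Laurent
variable {n : ℕ}

theorem MonoidHom.apply_ofAdd_eq_prod_zpow {ι G : Type*} [Fintype ι] [DecidableEq ι]
    [CommGroup G] (h : Multiplicative (ι → ℤ) →* G) (b : ι → ℤ) :
    h (Multiplicative.ofAdd b) = ∏ k, h (Multiplicative.ofAdd (Pi.single k 1)) ^ b k := by
  conv_lhs => rw [← Finset.univ_sum_single b]
  simp only [ofAdd_sum, map_prod]
  refine Finset.prod_congr rfl fun k _ => ?_
  rw [← map_zpow, ← ofAdd_zsmul, ← Pi.single_smul', smul_eq_mul, mul_one]

theorem map_lmono {R E : Type} [CommRing R] [Field E] (χ : Laur n R →+* E) (b : Fin n → ℤ) :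
    χ (lmono b) = ∏ k, χ (lmono (Pi.single k 1)) ^ b k := by
  have h := MonoidHom.apply_ofAdd_eq_prod_zpow
    ((χ : Laur n R →* E).comp (AddMonoidAlgebra.of R (Fin n → ℤ))).toHomUnits b
  simpa [Units.ext_iff, lmono] using h

theorem laurEval_zero {F : Type} [Field F] (φ : ℂ →+* F) (p : Fin n → F) :
    laurEval φ p 0 = 0 :=
  Finsupp.sum_zero_index

theorem laurEval_add {F : Type} [Field F] (φ : ℂ →+* F) (p : Fin n → F) (g h : Laur n ℂ) :
    laurEval φ p (g + h) = laurEval φ p g + laurEval φ p h :=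
  Finsupp.sum_add_index' (by simp) (by simp [add_mul])

theorem laurEval_single {F : Type} [Field F] (φ : ℂ →+* F) (p : Fin n → F)
    (m : Fin n → ℤ) (c : ℂ) :
    laurEval φ p (AddMonoidAlgebra.single m c) = φ c * ∏ k, p k ^ m k :=
  Finsupp.sum_single_index (by simp)

theorem laurMap_single {A B : Type} [CommRing A] [CommRing B] (φ : A →+* B)
    (m : Fin n → ℤ) (c : A) :
    laurMap φ (AddMonoidAlgebra.single m c : Laur n A) = AddMonoidAlgebra.single m (φ c) :=
  congrArg AddMonoidAlgebra.ofCoeff (Finsupp.mapRange_single (hf := φ.map_zero))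

theorem map_laurMap_eq_laurEval {R E : Type} [CommRing R] [Field E] [Algebra R E]
    (χ : Laur n R →ₐ[R] E) (φ : ℂ →+* R) (g : Laur n ℂ) :
    χ (laurMap φ g) =
      laurEval ((algebraMap R E).comp φ) (fun k => χ (lmono (Pi.single k 1))) g := by
  induction g using AddMonoidAlgebra.induction_linear with
  | zero => rw [map_zero, map_zero, laurEval_zero]
  | add g h hg hh => rw [map_add, map_add, laurEval_add, hg, hh]
  | single m c =>
    have hsingle : (AddMonoidAlgebra.single m (φ c) : Laur n R) = φ c • lmono m := by
      simp [lmono]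
    rw [laurMap_single, laurEval_single, hsingle, map_smul, Algebra.smul_def]
    exact congrArg _ (map_lmono (χ : Laur n R →+* E) m)

theorem lpderiv_add {A : Type} [CommRing A] (j : Fin n) (g h : Laur n A) :
    lpderiv j (g + h) = lpderiv j g + lpderiv j h :=
  Finsupp.sum_add_index' (by simp) fun _ _ _ => by rw [mul_add, AddMonoidAlgebra.single_add]

theorem lpderiv_single {A : Type} [CommRing A] (j : Fin n) (m : Fin n → ℤ) (c : A) :
    lpderiv j (AddMonoidAlgebra.single m c : Laur n A) =
      AddMonoidAlgebra.single (m - Pi.single j 1) ((m j : A) * c) :=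
  Finsupp.sum_single_index (by simp)

theorem lpderiv_laurMap {A B : Type} [CommRing A] [CommRing B] (φ : A →+* B) (j : Fin n)
    (g : Laur n A) : lpderiv j (laurMap φ g) = laurMap φ (lpderiv j g) := by
  induction g using AddMonoidAlgebra.induction_linear with
  | zero => simp [lpderiv]
  | add g h hg hh => rw [map_add, lpderiv_add, lpderiv_add, map_add, hg, hh]
  | single m c => rw [laurMap_single, lpderiv_single, lpderiv_single, laurMap_single, map_mul,
      map_intCast]

def laurEvalHom (R : Type) {E : Type} [CommRing R] [Field E] [Algebra R E] (p : Fin n → Eˣ) :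
    Laur n R →ₐ[R] E :=
  AddMonoidAlgebra.lift R E (Fin n → ℤ) <| (Units.coeHom E).comp
    { toFun := fun b => ∏ k, p k ^ b.toAdd k
      map_one' := by simp
      map_mul' := fun b c => by simp [zpow_add, Finset.prod_mul_distrib] }

theorem laurEvalHom_lmono_single (R : Type) {E : Type} [CommRing R] [Field E] [Algebra R E]
    (p : Fin n → Eˣ) (k : Fin n) : laurEvalHom R p (lmono (Pi.single k 1)) = p k := by
  simp [laurEvalHom, lmono, Pi.single_apply]

end Laurent

section Likelihood
variable {l n : ℕ} (f : Fin l → Laur n ℂ)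

def homPoint (ψ : OXK f →ₐ[KK l n] Kbar l n) : Fin n → Kbar l n :=
  fun k => ψ (xU f (RingHom.id (KK l n)) k)

def wEval (p : Fin n → Kbar l n) (j : Fin n) : Kbar l n :=
  algebraMap (KK l n) (Kbar l n) (nuGen l n j) * (p j)⁻¹ -
    ∑ i : Fin l, algebraMap (KK l n) (Kbar l n) (sGen l n i) *
      ((laurEval (cbar l n) p (f i))⁻¹ * laurEval (cbar l n) p (lpderiv j (f i)))

variable {f}

theorem fImg_id (i : Fin l) : fImg f (RingHom.id (KK l n)) i = laurMap (cC l n) (f i) := rfl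

theorem map_algebraMap_laurMap (ψ : OXK f →ₐ[KK l n] Kbar l n) (g : Laur n ℂ) :
    ψ (algebraMap (Laur n (KK l n)) (OXK f) (laurMap (cC l n) g)) =
      laurEval (cbar l n) (homPoint f ψ) g :=
  map_laurMap_eq_laurEval (ψ.comp (IsScalarTower.toAlgHom _ _ _)) (cC l n) g

theorem map_fU (ψ : OXK f →ₐ[KK l n] Kbar l n) (i : Fin l) :
    ψ (fU f (RingHom.id (KK l n)) i) = laurEval (cbar l n) (homPoint f ψ) (f i) := by
  rw [fU, IsUnit.unit_spec]
  exact map_algebraMap_laurMap ψ (f i)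

theorem map_fU_inv (ψ : OXK f →ₐ[KK l n] Kbar l n) (i : Fin l) :
    ψ ↑(fU f (RingHom.id (KK l n)) i)⁻¹ =
      (laurEval (cbar l n) (homPoint f ψ) (f i))⁻¹ := by
  rw [map_units_inv, map_fU]

theorem map_wElt (ψ : OXK f →ₐ[KK l n] Kbar l n) (j : Fin n) :
    ψ (wElt f j) = wEval f (homPoint f ψ) j := by
  simp only [wElt, wEval, map_sub, map_mul, map_sum, AlgHom.commutes, map_units_inv, map_fU,
    fImg_id, lpderiv_laurMap, map_algebraMap_laurMap]
  rfl

theorem homPoint_mem_critSet (ψ : OXK f →ₐ[KK l n] Kbar l n) (hψ : ∀ j, ψ (wElt f j) = 0) :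
    homPoint f ψ ∈ critSet f :=
  ⟨fun k => ((xU f _ k).isUnit.map ψ).ne_zero,
    fun i => map_fU ψ i ▸ ((fU f _ i).isUnit.map ψ).ne_zero,
    fun j => (map_wElt ψ j).symm.trans (hψ j)⟩

theorem exists_algHom_homPoint_eq {p : Fin n → Kbar l n} (hp : p ∈ critSet f) :
    ∃ ψ : OXK f →ₐ[KK l n] Kbar l n, homPoint f ψ = p := by
  obtain ⟨hp0, hf0, -⟩ := hp
  let χ := laurEvalHom (KK l n) fun k => Units.mk0 (p k) (hp0 k)
  have hχ : (fun k => χ (lmono (Pi.single k 1))) = p :=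
    funext fun k => laurEvalHom_lmono_single _ _ k
  have hunit : IsUnit (χ (FProd f (RingHom.id (KK l n)))) := by
    simp only [FProd, map_prod, IsUnit.prod_iff]
    intro i _
    rw [fImg_id, map_laurMap_eq_laurEval, hχ]
    exact (hf0 i).isUnit
  exact ⟨IsLocalization.Away.liftAlgHom _ hunit, funext fun k =>
    (IsLocalization.Away.lift_eq _ hunit _).trans (congrFun hχ k)⟩

theorem wElt_mem_likeIdeal (j : Fin n) : wElt f j ∈ likeIdeal f :=
  Ideal.subset_span ⟨j, rfl⟩

theorem exists_algHom_quotient_apply_eq_iff (v : OXK f) (g : (Fin n → Kbar l n) → Kbar l n)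
    (hg : ∀ ψ : OXK f →ₐ[KK l n] Kbar l n, ψ v = g (homPoint f ψ)) (z : Kbar l n) :
    (∃ ψ : (OXK f ⧸ likeIdeal f) →ₐ[KK l n] Kbar l n, ψ (Ideal.Quotient.mk _ v) = z) ↔
      ∃ p ∈ critSet f, z = g p := by
  constructor
  · rintro ⟨ψ, rfl⟩
    let ψ' := ψ.comp (Ideal.Quotient.mkₐ (KK l n) (likeIdeal f))
    refine ⟨_, homPoint_mem_critSet ψ' fun j => ?_, hg ψ'⟩
    rw [AlgHom.comp_apply, Ideal.Quotient.mkₐ_eq_mk,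
      Ideal.Quotient.eq_zero_iff_mem.mpr (wElt_mem_likeIdeal j), map_zero]
  · rintro ⟨p, hp, rfl⟩
    obtain ⟨ψ, rfl⟩ := exists_algHom_homPoint_eq hp
    have hker : likeIdeal f ≤ RingHom.ker ψ :=
      Ideal.span_le.mpr fun _ ⟨j, hj⟩ => hj ▸ (map_wElt ψ j).trans (hp.2.2 j)
    exact ⟨Ideal.Quotient.liftₐ _ ψ hker, hg ψ⟩

end Likelihood

theorem stmt13_general {l n : ℕ}
    (f : Fin l → Laur n ℂ)
    [FiniteDimensional (KK l n) (OXK f ⧸ likeIdeal f)] :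
    (∀ k : Fin n,
      {z : Kbar l n | Polynomial.aeval z
          (LinearMap.charpoly (LinearMap.mulLeft (KK l n)
            (Ideal.Quotient.mk (likeIdeal f)
              ↑(xU f (RingHom.id (KK l n)) k)))) = 0} =
        {z : Kbar l n | ∃ p ∈ critSet f, z = p k}) ∧
    (∀ i : Fin l,
      {z : Kbar l n | Polynomial.aeval z
          (LinearMap.charpoly (LinearMap.mulLeft (KK l n)
            (Ideal.Quotient.mk (likeIdeal f)
              ↑(fU f (RingHom.id (KK l n)) i)⁻¹))) = 0} =
        {z : Kbar l n | ∃ p ∈ critSet f, z = (laurEval (cbar l n) p (f i))⁻¹}) := by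
  refine ⟨fun k => ?_, fun i => ?_⟩ <;> ext z <;>
    rw [Set.mem_ofPred_eq, aeval_charpoly_mulLeft_eq_zero_iff, Set.mem_ofPred_eq]
  · exact exists_algHom_quotient_apply_eq_iff _ (· k) (fun _ => rfl) z
  · exact exists_algHom_quotient_apply_eq_iff _ _ (fun ψ => map_fU_inv ψ i) z

theorem stmt13 {l n : ℕ} (hn : 1 ≤ n) (hl : 1 ≤ l)
    (f : Fin l → Laur n ℂ) (hf : ∀ i, f i ≠ 0)
    [FiniteDimensional (KK l n) (OXK f ⧸ likeIdeal f)]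
    (hnz : Nontrivial (OXK f ⧸ likeIdeal f)) :
    (∀ k : Fin n,
      {z : Kbar l n | Polynomial.aeval z
          (LinearMap.charpoly (LinearMap.mulLeft (KK l n)
            (Ideal.Quotient.mk (likeIdeal f)
              ↑(xU f (RingHom.id (KK l n)) k)))) = 0} =
        {z : Kbar l n | ∃ p ∈ critSet f, z = p k}) ∧
    (∀ i : Fin l,
      {z : Kbar l n | Polynomial.aeval z
          (LinearMap.charpoly (LinearMap.mulLeft (KK l n)
            (Ideal.Quotient.mk (likeIdeal f)
              ↑(fU f (RingHom.id (KK l n)) i)⁻¹))) = 0} =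
        {z : Kbar l n | ∃ p ∈ critSet f, z = (laurEval (cbar l n) p (f i))⁻¹}) :=
  stmt13_general f

end
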